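/- For all n ≥ 2, the number of 2-ascent sequences of length n avoiding the pattern 012 equals (n+1)·2^(n-2). -/

import Mathlib

/-- Number of ascents of a sequence: indices j with a_j < a_{j+1}. -/
def ascN (l : List ℕ) : ℕ := (l.zip l.tail).countP (fun q => decide (q.1 < q.2))

/-- `a` is a p-ascent sequence: nonempty, starts with 0, and each later entry
is at most `p` plus the number of ascents of the preceding prefix. -/
def IsPAsc (p : ℕ) (a : List ℕ) : Prop :=
  a.head? = some 0 ∧ ∀ i : Fin a.length, 1 ≤ i.val → a.get i ≤ p + ascN (a.take i.val)

def Avoids01 (a : List ℕ) : Prop := ∀ i j : Fin a.length, i < j → ¬ a.get i < a.get j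

def Avoids10 (a : List ℕ) : Prop := ∀ i j : Fin a.length, i < j → ¬ a.get j < a.get i

def Avoids012 (a : List ℕ) : Prop :=
  ∀ i j k : Fin a.length, i < j → j < k → ¬ (a.get i < a.get j ∧ a.get j < a.get k)

/-- primitive: no two equal consecutive letters -/
def Primitive (a : List ℕ) : Prop := a.Chain' (· ≠ ·)

/-!
A 012-avoiding 2-ascent sequence never exceeds 2: at the first entry above 2 the preceding prefix
must contain an ascent `x < y`, and `y ≤ 2` would complete an occurrence of 012. So these sequences
are exactly `0 :: t` with `t` a word over `{0, 1, 2}` containing no 1 before a 2. Splitting such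
words by their first letter (a leading 1 forces the rest to avoid 2), their number `f m` for
length `m` satisfies `f (m + 1) = 2 f m + 2 ^ m`, whence `f (m + 1) = (m + 3) 2 ^ m`.
-/

open scoped List

theorem List.cons_sublist_cons_iff_of_ne {α : Type*} {x c : α} {l t : List α} (hc : c ≠ x) :
    x :: l <+ c :: t ↔ x :: l <+ t := by
  simp [List.sublist_cons_iff, Ne.symm hc]

theorem avoids012_iff_sublist {a : List ℕ} :
    Avoids012 a ↔ ∀ x y z, x < y → y < z → ¬ [x, y, z] <+ a := by
  constructor
  · intro h x y z hxy hyz hs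
    obtain ⟨is, his, hsorted⟩ := List.sublist_eq_map_getElem hs
    rcases is with _ | ⟨i, _ | ⟨j, _ | ⟨k, _ | ⟨l, is⟩⟩⟩⟩ <;> simp at his
    obtain ⟨rfl, rfl, rfl⟩ := his
    simp only [List.pairwise_cons, List.mem_cons, List.not_mem_nil] at hsorted
    exact h i j k (hsorted.1 j (by simp)) (hsorted.2.1 k (by simp)) ⟨hxy, hyz⟩
  · rintro h i j k hij hjk ⟨h1, h2⟩
    exact h _ _ _ h1 h2
      (List.map_getElem_sublist (is := [i, j, k]) (by simp [hij, hjk, hij.trans hjk]))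

theorem ascN_cons_cons (x y : ℕ) (l : List ℕ) :
    ascN (x :: y :: l) = (if x < y then 1 else 0) + ascN (y :: l) := by
  simp only [ascN, List.tail_cons, List.zip_cons_cons, List.countP_cons, decide_eq_true_eq]
  omega

theorem exists_sublist_of_ascN_ne_zero {l : List ℕ} (h : ascN l ≠ 0) :
    ∃ x y, x < y ∧ [x, y] <+ l := by
  induction l with
  | nil => simp [ascN] at h
  | cons x l ih =>
    rcases l with _ | ⟨y, l⟩
    · simp [ascN] at h
    by_cases hxy : x < y
    · exact ⟨x, y, hxy, by simp⟩
    · rw [ascN_cons_cons, if_neg hxy, zero_add] at h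
      obtain ⟨u, v, huv, hs⟩ := ih h
      exact ⟨u, v, huv, hs.cons x⟩

theorem IsPAsc.exists_eq_zero_cons {p : ℕ} {a : List ℕ} (h : IsPAsc p a) : ∃ t, a = 0 :: t := by
  rcases a with _ | ⟨c, t⟩
  · simp [IsPAsc] at h
  · obtain rfl : c = 0 := by simpa using h.1
    exact ⟨t, rfl⟩

theorem IsPAsc.le_of_avoids012 {p : ℕ} {a : List ℕ} (hasc : IsPAsc p a) (havoid : Avoids012 a) :
    ∀ v ∈ a, v ≤ p := by
  obtain ⟨t, rfl⟩ := hasc.exists_eq_zero_cons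
  suffices h : ∀ k (hk : k < (0 :: t).length), (0 :: t)[k] ≤ p by
    intro v hv
    obtain ⟨k, hk, rfl⟩ := List.mem_iff_getElem.mp hv
    exact h k hk
  intro k
  induction k using Nat.strong_induction_on with
  | _ k ih =>
  intro hk
  rcases Nat.eq_zero_or_pos k with rfl | hk0
  · simp
  by_contra! hgt
  have hbound : (0 :: t)[k] ≤ p + ascN ((0 :: t).take k) := by
    simpa using hasc.2 ⟨k, hk⟩ hk0
  obtain ⟨x, y, hxy, hs⟩ := exists_sublist_of_ascN_ne_zero (l := (0 :: t).take k) (by omega)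
  have hy : y ≤ p := by
    obtain ⟨j, hj, hjy⟩ := List.mem_iff_getElem.mp (hs.subset (show y ∈ [x, y] by simp))
    simp only [List.length_take, List.getElem_take] at hj hjy
    exact hjy ▸ ih j (by omega) (by omega)
  have hdrop : [(0 :: t)[k]] <+ (0 :: t).drop k := by
    simp [List.drop_eq_getElem_cons hk]
  refine (avoids012_iff_sublist.mp havoid) x y ((0 :: t)[k]) hxy (by omega) ?_
  have := hs.append hdrop
  rwa [List.take_append_drop] at this

theorem isPAsc_zero_cons {p : ℕ} {t : List ℕ} (ht : ∀ v ∈ t, v ≤ p) : IsPAsc p (0 :: t) := by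
  refine ⟨rfl, fun i _ => ?_⟩
  have : (0 :: t).get i ≤ p := by
    rcases i with ⟨_ | i, hi⟩
    · simp
    · exact ht _ (by simp)
  omega

theorem avoids012_zero_cons_iff {t : List ℕ} (ht : ∀ v ∈ t, v ≤ 2) :
    Avoids012 (0 :: t) ↔ ¬ [1, 2] <+ t := by
  rw [avoids012_iff_sublist]
  constructor
  · intro h hs
    exact h 0 1 2 zero_lt_one one_lt_two (hs.cons_cons 0)
  · intro h x y z hxy hyz hs
    have hz : z ≤ 2 := by
      rcases List.mem_cons.mp (hs.subset (show z ∈ [x, y, z] by simp)) with rfl | hz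
      · omega
      · exact ht z hz
    obtain ⟨rfl, rfl, rfl⟩ : x = 0 ∧ y = 1 ∧ z = 2 := by omega
    rcases List.sublist_cons_iff.mp hs with hs | ⟨r, hr, hs⟩
    · exact h ((List.sublist_cons_self 0 _).trans hs)
    · obtain rfl : r = [1, 2] := by simpa using hr.symm
      exact h hs

section Words

variable {α : Type*} [DecidableEq α]

def words (s : Finset α) : ℕ → Finset (List α)
  | 0 => {[]}
  | m + 1 => (s ×ˢ words s m).image fun p => p.1 :: p.2

theorem mem_words {s : Finset α} {m : ℕ} {l : List α} :
    l ∈ words s m ↔ l.length = m ∧ ∀ v ∈ l, v ∈ s := by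
  induction m generalizing l with
  | zero => simp +contextual [words]
  | succ m ih => cases l <;> simp [words, ih]; tauto

theorem card_filter_words_succ (s : Finset α) (m : ℕ) (P : List α → Prop) [DecidablePred P] :
    ((words s (m + 1)).filter P).card = ∑ c ∈ s, ((words s m).filter fun t => P (c :: t)).card := by
  have hcons : Function.Injective fun p : α × List α => p.1 :: p.2 := fun p q h => by
    simpa [Prod.ext_iff] using h
  rw [words, Finset.filter_image, Finset.card_image_of_injective _ hcons]
  simp only [Finset.card_filter, Finset.sum_product]

theorem card_words (s : Finset α) (m : ℕ) : (words s m).card = s.card ^ m := by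
  induction m with
  | zero => simp [words]
  | succ m ih =>
    simpa [pow_succ', ih] using card_filter_words_succ s m (fun _ => True)

theorem filter_not_mem_words (s : Finset α) (m : ℕ) (a : α) :
    (words s m).filter (a ∉ ·) = words (s.erase a) m := by
  ext l
  simp only [Finset.mem_filter, mem_words, Finset.mem_erase]
  grind

end Words

def wordsAvoiding12 (m : ℕ) : Finset (List ℕ) :=
  (words (Finset.Iic 2) m).filter fun t => ¬ [1, 2] <+ t

theorem card_wordsAvoiding12_succ (m : ℕ) :
    (wordsAvoiding12 (m + 1)).card = 2 * (wordsAvoiding12 m).card + 2 ^ m := by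
  simp only [wordsAvoiding12, card_filter_words_succ, show Finset.Iic 2 = {0, 1, 2} by decide]
  simp [List.cons_sublist_cons_iff_of_ne, filter_not_mem_words, card_words]
  ring

theorem card_wordsAvoiding12 (m : ℕ) : (wordsAvoiding12 (m + 1)).card = (m + 3) * 2 ^ m := by
  induction m with
  | zero =>
    rw [card_wordsAvoiding12_succ]
    simp [wordsAvoiding12, words, Finset.filter_singleton]
  | succ m ih =>
    rw [card_wordsAvoiding12_succ, ih]
    ring

theorem isPAsc_two_and_avoids012_iff {a : List ℕ} :
    IsPAsc 2 a ∧ Avoids012 a ↔ ∃ t, a = 0 :: t ∧ (∀ v ∈ t, v ≤ 2) ∧ ¬ [1, 2] <+ t := by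
  constructor
  · rintro ⟨hasc, havoid⟩
    obtain ⟨t, rfl⟩ := hasc.exists_eq_zero_cons
    have ht : ∀ v ∈ t, v ≤ 2 := fun v hv =>
      hasc.le_of_avoids012 havoid v (List.mem_cons_of_mem 0 hv)
    exact ⟨t, rfl, ht, (avoids012_zero_cons_iff ht).mp havoid⟩
  · rintro ⟨t, rfl, ht, h12⟩
    exact ⟨isPAsc_zero_cons ht, (avoids012_zero_cons_iff ht).mpr h12⟩

theorem stmt11 (n : ℕ) (hn : 2 ≤ n) :
    Set.ncard {a : List ℕ | a.length = n ∧ IsPAsc 2 a ∧ Avoids012 a} =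
      (n + 1) * 2 ^ (n - 2) := by
  obtain ⟨m, rfl⟩ := Nat.exists_eq_add_of_le' hn
  have hset : {a : List ℕ | a.length = m + 2 ∧ IsPAsc 2 a ∧ Avoids012 a} =
      (0 :: ·) '' (wordsAvoiding12 (m + 1) : Set (List ℕ)) := by
    ext a
    simp only [Set.mem_ofPred_eq, isPAsc_two_and_avoids012_iff, Set.mem_image, Finset.mem_coe,
      wordsAvoiding12, Finset.mem_filter, mem_words, Finset.mem_Iic]
    grind
  rw [hset, Set.ncard_image_of_injective _ List.cons_injective, Set.ncard_coe_finset,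
    card_wordsAvoiding12]
  simp
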